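/- Let G be a finite simple connected interval graph and let ω(G) be the maximum size of a clique in G. If every maximum clique of G contains a simplicial vertex, then h(G) = mh(G) = ω(G) − 1; otherwise, mh(G) = ω(G). -/

import Mathlib

open SimpleGraph

namespace HuntersRabbit

universe u

variable {V : Type u}

/-- `shots S i` is the set `S_{i+1}` shot at (paper, 1-indexed) round `i+1`. -/
def shots (S : List (Finset V)) (i : ℕ) : Finset V := S.getD i ∅

/-- A hunter strategy is a finite sequence of nonempty subsets of vertices. -/
def ValidStrategy (S : List (Finset V)) : Prop := ∀ s ∈ S, s.Nonempty

/-- The hunter strategy `S` uses at most `k` hunters. -/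
def Uses (S : List (Finset V)) (k : ℕ) : Prop := ∀ s ∈ S, s.card ≤ k

/-- A rabbit trajectory of length `ℓ` starting from `W`: a walk `r 0, r 1, …, r ℓ`
with `r 0 ∈ W` (only the values at `0, …, ℓ` are relevant). -/
def Trajectory (G : SimpleGraph V) (W : Set V) (ℓ : ℕ) (r : ℕ → V) : Prop :=
  r 0 ∈ W ∧ ∀ i, i < ℓ → G.Adj (r i) (r (i + 1))

/-- The hunter strategy `S = (S_1, …, S_ℓ)` is winning with respect to `W`:
every rabbit trajectory `(r_0, …, r_ℓ)` starting from `W` satisfies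
`r_j ∈ S_{j+1}` for some `0 ≤ j < ℓ`. -/
def IsWinning (G : SimpleGraph V) (W : Set V) (S : List (Finset V)) : Prop :=
  ∀ r : ℕ → V, Trajectory G W S.length r → ∃ j, j < S.length ∧ r j ∈ shots S j

/-- The contaminated sets: `Zset G W S 0 = W` and
`Zset G W S (i+1) = {x | ∃ y ∈ Zset G W S i \ S_{i+1}, y ~ x}`. -/
def Zset (G : SimpleGraph V) (W : Set V) (S : List (Finset V)) : ℕ → Set V
  | 0 => W
  | i + 1 => {x | ∃ y ∈ Zset G W S i, y ∉ shots S i ∧ G.Adj y x}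

/-- `v` is cleared at (paper) round `i+1`: either `v ∈ S_{i+1}`, or
`N(v) ∩ Z_i` is nonempty and contained in `S_{i+1}`. -/
def ClearedAt (G : SimpleGraph V) (W : Set V) (S : List (Finset V)) (v : V) (i : ℕ) : Prop :=
  v ∈ shots S i ∨
    ((G.neighborSet v ∩ Zset G W S i).Nonempty ∧
      G.neighborSet v ∩ Zset G W S i ⊆ ↑(shots S i))

/-- The strategy is monotone: whenever `v` is cleared at some round and `v ∈ Z_j`
for some later (or equal) round `j`, then `v ∈ S_{j+1}`. -/
def IsMonotoneStrat (G : SimpleGraph V) (W : Set V) (S : List (Finset V)) : Prop :=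
  ∀ v : V, ∀ i j : ℕ, i < S.length → i < j → j < S.length →
    ClearedAt G W S v i → v ∈ Zset G W S j → v ∈ shots S j

/-- The hunter number `h_W(G)`: the minimum `k` such that some winning hunter
strategy with respect to `W` uses `k` hunters (with the convention that it is `0`
for a one-vertex graph). -/
noncomputable def hunterNumW (G : SimpleGraph V) (W : Set V) : ℕ :=
  if Nat.card V = 1 then 0
  else sInf {k | ∃ S : List (Finset V), ValidStrategy S ∧ IsWinning G W S ∧ Uses S k}

/-- The hunter number `h(G) = h_V(G)`. -/
noncomputable def hunterNum (G : SimpleGraph V) : ℕ := hunterNumW G Set.univ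

/-- The monotone hunter number `mh_W(G)`. -/
noncomputable def mhunterNumW (G : SimpleGraph V) (W : Set V) : ℕ :=
  if Nat.card V = 1 then 0
  else sInf {k | ∃ S : List (Finset V),
    ValidStrategy S ∧ IsWinning G W S ∧ IsMonotoneStrat G W S ∧ Uses S k}

/-- The monotone hunter number `mh(G) = mh_V(G)`. -/
noncomputable def mhunterNum (G : SimpleGraph V) : ℕ := mhunterNumW G Set.univ

/-- The maximum size of a clique of `G`. -/
noncomputable def cliqueNum (G : SimpleGraph V) : ℕ :=
  sSup {n | ∃ s : Finset V, G.IsNClique n s}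

/-- `G` is an interval graph: the intersection graph of a family of closed real
intervals (distinct vertices adjacent iff their intervals intersect). -/
def IsIntervalGraph (G : SimpleGraph V) : Prop :=
  ∃ a b : V → ℝ, (∀ v, a v ≤ b v) ∧
    ∀ u v : V, G.Adj u v ↔
      u ≠ v ∧ (Set.Icc (a u) (b u) ∩ Set.Icc (a v) (b v)).Nonempty


/-! ### Infrastructure -/

section Infra

variable {G : SimpleGraph V} {W : Set V} {S : List (Finset V)}

lemma shots_mem {j : ℕ} (h : j < S.length) : shots S j ∈ S := by
  rw [shots, List.getD_eq_getElem?_getD, List.getElem?_eq_getElem h]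
  exact List.getElem_mem h

lemma shots_card_le {k : ℕ} (hU : Uses S k) (j : ℕ) : (shots S j).card ≤ k := by
  by_cases h : j < S.length
  · exact hU _ (shots_mem h)
  · rw [shots, List.getD_eq_getElem?_getD, List.getElem?_eq_none (le_of_not_gt h)]
    simp

lemma shots_nonempty {j : ℕ} (hV : ValidStrategy S) (h : j < S.length) :
    (shots S j).Nonempty := hV _ (shots_mem h)

lemma mem_Zset_succ {x : V} {i : ℕ} :
    x ∈ Zset G W S (i + 1) ↔ ∃ y ∈ Zset G W S i, y ∉ shots S i ∧ G.Adj y x := Iff.rfl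

lemma Zset_empty_succ {i : ℕ} (h : Zset G W S i = ∅) : Zset G W S (i + 1) = ∅ := by
  ext x
  simp [mem_Zset_succ, h]

lemma Zset_empty_mono {i j : ℕ} (hij : i ≤ j) (h : Zset G W S i = ∅) :
    Zset G W S j = ∅ := by
  induction j with
  | zero => exact (Nat.le_zero.mp hij) ▸ h
  | succ n ih =>
    rcases Nat.lt_or_ge i (n+1) with h' | h'
    · exact Zset_empty_succ (ih (Nat.lt_succ_iff.mp h'))
    · exact (le_antisymm hij h') ▸ h

/-- A trajectory that avoids all shots is contaminated at each step. -/
lemma traj_mem_Zset {r : ℕ → V} (h0 : r 0 ∈ W)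
    (hadj : ∀ i, i < S.length → G.Adj (r i) (r (i + 1)))
    (havoid : ∀ j, j < S.length → r j ∉ shots S j) :
    ∀ j, j ≤ S.length → r j ∈ Zset G W S j := by
  intro j
  induction j with
  | zero => intro _; exact h0
  | succ n ih =>
    intro hn
    exact ⟨r n, ih (Nat.le_of_succ_le hn), havoid n (Nat.lt_of_succ_le hn),
      hadj n (Nat.lt_of_succ_le hn)⟩

lemma isWinning_of_Zset_empty (h : Zset G W S S.length = ∅) : IsWinning G W S := by
  intro r hr
  by_contra hcon
  push_neg at hcon
  have := traj_mem_Zset hr.1 hr.2 hcon S.length le_rfl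
  rw [h] at this
  exact this

/-- From a contaminated vertex, build an escaping trajectory backwards. -/
lemma exists_escape {x : V} {n : ℕ} (hx : x ∈ Zset G W S n) :
    ∃ r : ℕ → V, r 0 ∈ W ∧ (∀ i, i < n → G.Adj (r i) (r (i + 1))) ∧
      (∀ j, j < n → r j ∉ shots S j) ∧ r n = x := by
  induction n generalizing x with
  | zero => exact ⟨fun _ => x, hx, by simp, by simp, rfl⟩
  | succ n ih =>
    obtain ⟨y, hy, hyS, hyx⟩ := hx
    obtain ⟨r, hr0, hradj, hravoid, hrn⟩ := ih hy
    refine ⟨fun i => if i ≤ n then r i else x, by simpa using hr0, ?_, ?_, by simp⟩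
    · intro i hi
      rcases Nat.lt_or_ge i n with h' | h'
      · simpa [Nat.le_of_lt h', Nat.succ_le_of_lt h'] using hradj i h'
      · have : i = n := le_antisymm (Nat.lt_succ_iff.mp hi) h'
        subst this
        simpa [hrn] using hyx
    · intro j hj
      have hjn : j ≤ n := Nat.lt_succ_iff.mp hj
      rcases Nat.lt_or_ge j n with h' | h'
      · simpa [hjn] using hravoid j h'
      · have : j = n := le_antisymm hjn h'
        subst this
        simpa [hrn] using hyS

lemma Zset_length_empty_of_isWinning (hwin : IsWinning G W S) :
    Zset G W S S.length = ∅ := by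
  by_contra hcon
  rw [Set.eq_empty_iff_forall_notMem] at hcon
  push_neg at hcon
  obtain ⟨x, hx⟩ := hcon
  obtain ⟨r, hr0, hradj, hravoid, _⟩ := exists_escape hx
  obtain ⟨j, hj, hjS⟩ := hwin r ⟨hr0, hradj⟩
  exact hravoid j hj hjS

end Infra

/-! ### Clique number -/

section Cliq

variable [Fintype V] {G : SimpleGraph V}

lemma cliqueSet_bddAbove : BddAbove {n | ∃ s : Finset V, G.IsNClique n s} := by
  refine ⟨Fintype.card V, fun n hn => ?_⟩
  obtain ⟨s, hs⟩ := hn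
  rw [← hs.2]
  simpa using Finset.card_le_univ s

lemma exists_cliqueNum : ∃ s : Finset V, G.IsNClique (cliqueNum G) s := by
  have h0 : (0 : ℕ) ∈ {n | ∃ s : Finset V, G.IsNClique n s} :=
    ⟨∅, by simp [SimpleGraph.isNClique_iff, SimpleGraph.IsClique]⟩
  exact Nat.sSup_mem ⟨0, h0⟩ cliqueSet_bddAbove

lemma IsClique.card_le_cliqueNum {s : Finset V} (hs : G.IsClique ↑s) :
    s.card ≤ cliqueNum G :=
  le_csSup cliqueSet_bddAbove ⟨s, hs, rfl⟩

end Cliq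

/-! ### Lower bounds -/

section Lower

variable [Fintype V] {G : SimpleGraph V} {S : List (Finset V)} {k : ℕ}

lemma shots_eq_empty {j : ℕ} (h : S.length ≤ j) : shots S j = ∅ := by
  rw [shots, List.getD_eq_getElem?_getD, List.getElem?_eq_none h]
  rfl

/-- If at least two vertices of a clique `K ⊆ Zset j` escape the shot at round `j`,
then `K` is still fully contaminated at round `j+1`. -/
lemma clique_persists [DecidableEq V] {K : Finset V} (hcl : G.IsClique ↑K) {j : ℕ}
    (hKZ : ↑K ⊆ Zset G Set.univ S j)
    (h2 : 1 < (K.filter (fun w => w ∉ shots S j)).card) :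
    ↑K ⊆ Zset G Set.univ S (j + 1) := by
  intro x hx
  obtain ⟨w₁, hw₁, w₂, hw₂, hne⟩ := Finset.one_lt_card.mp h2
  simp only [Finset.mem_filter] at hw₁ hw₂
  rcases eq_or_ne x w₁ with rfl | hxw
  · exact ⟨w₂, hKZ hw₂.1, hw₂.2, hcl hw₂.1 hx hne.symm⟩
  · exact ⟨w₁, hKZ hw₁.1, hw₁.2, hcl hw₁.1 hx (fun h => hxw h.symm)⟩

/-- Any winning strategy uses at least `K.card - 1` hunters, for any clique `K`. -/
lemma card_le_succ_of_winning [DecidableEq V] {K : Finset V} (hcl : G.IsClique ↑K)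
    (hwin : IsWinning G Set.univ S) (hU : Uses S k) : K.card ≤ k + 1 := by
  by_contra hcon
  push_neg at hcon
  have hall : ∀ j, ↑K ⊆ Zset G Set.univ S j := by
    intro j
    induction j with
    | zero => intro x _; trivial
    | succ n ih =>
      refine clique_persists hcl ih ?_
      have h1 : K.card ≤ (K.filter (fun w => w ∉ shots S n)).card + k := by
        calc K.card ≤ (K.filter (fun w => w ∉ shots S n)).card
              + (K.filter (fun w => ¬ (w ∉ shots S n))).card := by
                rw [Finset.card_filter_add_card_filter_not]
          _ ≤ (K.filter (fun w => w ∉ shots S n)).card + k := by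
                gcongr
                calc (K.filter (fun w => ¬ (w ∉ shots S n))).card
                    ≤ (shots S n).card := by
                      apply Finset.card_le_card
                      intro w hw
                      simp only [Finset.mem_filter, not_not] at hw
                      exact hw.2
                  _ ≤ k := shots_card_le hU n
      omega
  have hZ := Zset_length_empty_of_isWinning hwin
  have hKne : K.Nonempty := Finset.card_pos.mp (by omega)
  obtain ⟨x, hx⟩ := hKne
  have := hall S.length hx
  rw [hZ] at this
  exact this

/-- The monotone lower bound: if `K` is a clique all of whose vertices are
non-simplicial, then any monotone winning strategy uses at least `K.card` hunters. -/
lemma card_le_of_monotone_winning [DecidableEq V] {K : Finset V} (hcl : G.IsClique ↑K)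
    (hK2 : 2 ≤ K.card) (hns : ∀ v ∈ K, ¬ G.IsClique (G.neighborSet v))
    (hwin : IsWinning G Set.univ S) (hmono : IsMonotoneStrat G Set.univ S)
    (hU : Uses S k) : K.card ≤ k := by
  by_contra hcon
  push_neg at hcon
  have hZL : Zset G Set.univ S S.length = ∅ := Zset_length_empty_of_isWinning hwin
  have hKne : K.Nonempty := Finset.card_pos.mp (by omega)
  -- the first break
  have hex : ∃ j, ¬ (↑K ⊆ Zset G Set.univ S (j + 1)) := by
    refine ⟨S.length, ?_⟩
    rw [Zset_empty_succ hZL]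
    obtain ⟨x, hx⟩ := hKne
    exact fun h => h hx
  classical
  set j : ℕ := Nat.find hex with hj
  have hbreak : ¬ (↑K ⊆ Zset G Set.univ S (j + 1)) := Nat.find_spec hex
  have hall : ∀ m, m ≤ j → ↑K ⊆ Zset G Set.univ S m := by
    intro m hm
    cases m with
    | zero => intro x _; trivial
    | succ n => exact of_not_not (Nat.find_min hex (by omega))
  -- at most one unshot vertex of K
  have hone : ∀ w₁ ∈ K, ∀ w₂ ∈ K, w₁ ∉ shots S j → w₂ ∉ shots S j → w₁ = w₂ := by
    intro w₁ h₁ w₂ h₂ hs₁ hs₂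
    by_contra hne
    refine hbreak (clique_persists hcl (hall j le_rfl) ?_)
    exact Finset.one_lt_card.mpr ⟨w₁, by simp [h₁, hs₁], w₂, by simp [h₂, hs₂], hne⟩
  have hjlen : j < S.length := by
    by_contra h
    rw [shots_eq_empty (le_of_not_gt h)] at hone
    obtain ⟨w₁, h₁, w₂, h₂, hne⟩ := Finset.one_lt_card.mp (by omega : 1 < K.card)
    exact hne (hone w₁ h₁ w₂ h₂ (by simp) (by simp))
  -- the unique unshot vertex u
  have hKnsub : ¬ ↑K ⊆ (shots S j : Set V) := by
    intro h
    have : K ⊆ shots S j := fun w hw => h hw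
    have := Finset.card_le_card this
    have := shots_card_le hU j
    omega
  obtain ⟨u, huK, hus⟩ : ∃ u ∈ K, u ∉ shots S j := by
    by_contra h
    push_neg at h
    exact hKnsub (fun w hw => h w hw)
  have huniq : ∀ w ∈ K, w ∉ shots S j → w = u := fun w hw hws => hone w hw u huK hws hus
  have herase : K.erase u ⊆ shots S j := by
    intro w hw
    rw [Finset.mem_erase] at hw
    by_contra hws
    exact hw.1 (huniq w hw.2 hws)
  -- all contaminated neighbours of u are shot
  have hNu : ∀ z, G.Adj u z → z ∈ Zset G Set.univ S j → z ∈ shots S j := by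
    intro z hadj hz
    by_contra hzs
    refine hbreak (fun x hx => ?_)
    rcases eq_or_ne x u with rfl | hne
    · exact ⟨z, hz, hzs, hadj.symm⟩
    · exact ⟨u, hall j le_rfl huK, hus, hcl huK hx (fun h => hne h.symm)⟩
  have hshot_eq : shots S j = K.erase u := by
    refine (Finset.eq_of_subset_of_card_le herase ?_).symm
    have h1 := shots_card_le hU j
    have h2 : (K.erase u).card = K.card - 1 := Finset.card_erase_of_mem huK
    omega
  -- the non-simplicial witness
  have hnsu := hns u huK
  rw [SimpleGraph.isClique_iff, Set.Pairwise] at hnsu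
  push_neg at hnsu
  obtain ⟨x, hxu, y0, hyu, hxyne, hxy⟩ := hnsu
  -- pick the witness outside K
  have hnotboth : x ∉ K ∨ y0 ∉ K := by
    by_contra h
    push_neg at h
    exact hxy (hcl h.1 h.2 hxyne)
  obtain ⟨y, hyadj, hyK⟩ : ∃ y, G.Adj u y ∧ y ∉ K := by
    rcases hnotboth with h | h
    · exact ⟨x, hxu, h⟩
    · exact ⟨y0, hyu, h⟩
  have hynZ : y ∉ Zset G Set.univ S j := by
    intro h
    have := hNu y hyadj h
    rw [hshot_eq, Finset.mem_erase] at this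
    exact hyK this.2
  -- the last round ≤ j where y was contaminated
  set r : ℕ := Nat.findGreatest (fun ρ => y ∈ Zset G Set.univ S ρ) j with hr
  have hyZr : y ∈ Zset G Set.univ S r :=
    Nat.findGreatest_spec (P := fun ρ => y ∈ Zset G Set.univ S ρ) (Nat.zero_le j)
      (show y ∈ Zset G Set.univ S 0 from trivial)
  have hrlej : r ≤ j := Nat.findGreatest_le j
  have hrltj : r < j := by
    rcases lt_or_eq_of_le hrlej with h | h
    · exact h
    · exact absurd (h ▸ hyZr) hynZ
  have hynZr1 : y ∉ Zset G Set.univ S (r + 1) :=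
    Nat.findGreatest_is_greatest (Nat.lt_succ_self r) (by omega)
  -- y is cleared at round r
  have hcleared : ClearedAt G Set.univ S y r := by
    right
    constructor
    · exact ⟨u, hyadj.symm, hall r (le_of_lt hrltj) huK⟩
    · intro z hz
      obtain ⟨hz1, hz2⟩ := hz
      by_contra hzs
      exact hynZr1 ⟨z, hz2, hzs, SimpleGraph.Adj.symm hz1⟩
  -- y is recontaminated at round j+1
  have hyZj1 : y ∈ Zset G Set.univ S (j + 1) := ⟨u, hall j le_rfl huK, hus, hyadj⟩
  have hj1len : j + 1 < S.length := by
    by_contra h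
    have : Zset G Set.univ S (j+1) = ∅ := Zset_empty_mono (le_of_not_gt h) hZL
    rw [this] at hyZj1
    exact hyZj1
  -- monotonicity forces shooting y and all of K.erase u at round j+1
  have hymust : y ∈ shots S (j + 1) :=
    hmono y r (j+1) (by omega) (by omega) hj1len hcleared hyZj1
  have hwmust : ∀ w ∈ K.erase u, w ∈ shots S (j + 1) := by
    intro w hw
    have hwK : w ∈ K := Finset.mem_of_mem_erase hw
    have hwne : w ≠ u := Finset.ne_of_mem_erase hw
    have hcw : ClearedAt G Set.univ S w j := Or.inl (herase hw)
    have hwZ : w ∈ Zset G Set.univ S (j + 1) :=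
      ⟨u, hall j le_rfl huK, hus, hcl huK hwK (fun h => hwne h.symm)⟩
    exact hmono w j (j+1) hjlen (by omega) hj1len hcw hwZ
  -- contradiction with the cardinality bound
  have hsub : insert y (K.erase u) ⊆ shots S (j + 1) := by
    intro w hw
    rcases Finset.mem_insert.mp hw with rfl | hw
    · exact hymust
    · exact hwmust w hw
  have hcard : K.card ≤ (shots S (j+1)).card := by
    have h1 : (insert y (K.erase u)).card = (K.erase u).card + 1 :=
      Finset.card_insert_of_notMem (fun h => hyK (Finset.mem_of_mem_erase h))
    have h2 : (K.erase u).card = K.card - 1 := Finset.card_erase_of_mem huK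
    have := Finset.card_le_card hsub
    omega
  have := shots_card_le hU (j+1)
  omega
end Lower

/-! ### The sweep construction: interval geometry -/

section Geom

open scoped Classical

variable [Fintype V] (a b : V → ℝ)

/-- The clique of intervals containing the point `p`. -/
noncomputable def Kp (p : ℝ) : Finset V :=
  Finset.univ.filter (fun v => a v ≤ p ∧ p ≤ b v)

lemma mem_Kp' {p : ℝ} {v : V} : v ∈ Kp a b p ↔ a v ≤ p ∧ p ≤ b v := by
  simp [Kp]

/-- All endpoints. -/
noncomputable def Epts : Finset ℝ := Finset.univ.image a ∪ Finset.univ.image b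

/-- The chosen sweep points: minimal representatives of ⊆-maximal point-cliques. -/
noncomputable def Ppts : Finset ℝ :=
  (Epts a b).filter (fun p =>
    (∀ q ∈ Epts a b, ¬ (Kp a b p ⊂ Kp a b q)) ∧
    (∀ q ∈ Epts a b, q < p → Kp a b q ≠ Kp a b p))

/-- The sorted list of sweep points. -/
noncomputable def ptl : List ℝ := (Ppts a b).sort (· ≤ ·)

/-- The `t`-th sweep clique. -/
noncomputable def Qc (t : ℕ) : Finset V := Kp a b ((ptl a b).getD t 0)

variable {a b}

lemma mem_Kp {p : ℝ} {v : V} : v ∈ Kp a b p ↔ a v ≤ p ∧ p ≤ b v := by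
  simp [Kp]

lemma Kp_isClique {G : SimpleGraph V}
    (hadj : ∀ u v : V, G.Adj u v ↔
      u ≠ v ∧ (Set.Icc (a u) (b u) ∩ Set.Icc (a v) (b v)).Nonempty)
    (p : ℝ) : G.IsClique ↑(Kp a b p) := by
  intro u hu v hv huv
  rw [Finset.mem_coe, mem_Kp] at hu hv
  exact (hadj u v).mpr ⟨huv, ⟨p, ⟨hu.1, hu.2⟩, ⟨hv.1, hv.2⟩⟩⟩

lemma Kp_nonempty_of_mem_Epts (hab : ∀ v, a v ≤ b v) {p : ℝ} (hp : p ∈ Epts a b) :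
    (Kp a b p).Nonempty := by
  rw [Epts, Finset.mem_union] at hp
  rcases hp with hp | hp <;> rw [Finset.mem_image] at hp <;> obtain ⟨v, -, rfl⟩ := hp
  · exact ⟨v, mem_Kp.mpr ⟨le_refl _, hab v⟩⟩
  · exact ⟨v, mem_Kp.mpr ⟨hab v, le_refl _⟩⟩

/-- Any finset of intervals with a common point is contained in some sweep clique. -/
lemma exists_sweep_clique_of_common (s : Finset V) (m : ℝ) (hs : s.Nonempty)
    (hm : ∀ v ∈ s, v ∈ Kp a b m) :
    ∃ t, t < (ptl a b).length ∧ s ⊆ Qc a b t := by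
  -- step 1: replace m by the largest left endpoint of s
  obtain ⟨v₀, hv₀, hq₁⟩ := Finset.exists_max_image s a hs
  set q₁ : ℝ := a v₀ with hq₁def
  have hq₁E : q₁ ∈ Epts a b := by
    rw [Epts, Finset.mem_union, Finset.mem_image]
    exact Or.inl ⟨v₀, Finset.mem_univ _, rfl⟩
  have hsub₁ : s ⊆ Kp a b q₁ := by
    intro v hv
    have h2 := (mem_Kp.mp (hm v₀ hv₀)).1
    have h3 := (mem_Kp.mp (hm v hv)).2
    exact mem_Kp.mpr ⟨hq₁ v hv, le_trans h2 h3⟩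
  -- step 2: a card-maximal superset among endpoint cliques
  set F : Finset ℝ := (Epts a b).filter (fun e => Kp a b q₁ ⊆ Kp a b e) with hF
  have hq₁F : q₁ ∈ F := Finset.mem_filter.mpr ⟨hq₁E, le_refl _⟩
  obtain ⟨q₂, hq₂F, hq₂max⟩ := Finset.exists_max_image F (fun e => (Kp a b e).card) ⟨q₁, hq₁F⟩
  have hq₂E : q₂ ∈ Epts a b := (Finset.mem_filter.mp hq₂F).1
  have hq₂sup : Kp a b q₁ ⊆ Kp a b q₂ := (Finset.mem_filter.mp hq₂F).2
  have hq₂maximal : ∀ e ∈ Epts a b, ¬ (Kp a b q₂ ⊂ Kp a b e) := by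
    intro e he hss
    have heF : e ∈ F := Finset.mem_filter.mpr ⟨he, hq₂sup.trans hss.subset⟩
    exact absurd (hq₂max e heF) (not_le.mpr (Finset.card_lt_card hss))
  -- step 3: the minimal representative point
  set M : Finset ℝ := (Epts a b).filter (fun e => Kp a b e = Kp a b q₂) with hM
  have hq₂M : q₂ ∈ M := Finset.mem_filter.mpr ⟨hq₂E, rfl⟩
  set q₃ : ℝ := M.min' ⟨q₂, hq₂M⟩ with hq₃def
  have hq₃M : q₃ ∈ M := Finset.min'_mem _ _
  have hq₃E : q₃ ∈ Epts a b := (Finset.mem_filter.mp hq₃M).1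
  have hq₃eq : Kp a b q₃ = Kp a b q₂ := (Finset.mem_filter.mp hq₃M).2
  have hq₃P : q₃ ∈ Ppts a b := by
    rw [Ppts, Finset.mem_filter]
    refine ⟨hq₃E, ?_, ?_⟩
    · intro q hq hss
      exact hq₂maximal q hq (hq₃eq ▸ hss)
    · intro q hq hlt heq
      have hqM : q ∈ M := Finset.mem_filter.mpr ⟨hq, heq.trans hq₃eq⟩
      exact absurd (Finset.min'_le M q hqM) (not_le.mpr hlt)
  have hq₃l : q₃ ∈ ptl a b := (Finset.mem_sort _).mpr hq₃P
  set t : ℕ := (ptl a b).idxOf q₃ with ht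
  refine ⟨t, List.idxOf_lt_length_iff.mpr hq₃l, ?_⟩
  have hget : (ptl a b).getD t 0 = q₃ := by
    rw [List.getD_eq_getElem?_getD,
      List.getElem?_eq_getElem (List.idxOf_lt_length_iff.mpr hq₃l)]
    simp [ht, List.getElem_idxOf]
  rw [Qc, hget, hq₃eq]
  exact hsub₁.trans hq₂sup

end Geom

section Geom2

open scoped Classical

variable [Fintype V] {a b : V → ℝ} {G : SimpleGraph V}

/-- Number of sweep phases. -/
noncomputable def nph (a b : V → ℝ) : ℕ := (ptl a b).length

lemma ptl_sorted : (ptl a b).Pairwise (· ≤ ·) := Finset.pairwise_sort _ _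

lemma ptl_nodup : (ptl a b).Nodup := Finset.sort_nodup _ _

lemma ptl_getD_mem {t : ℕ} (ht : t < nph a b) : (ptl a b).getD t 0 ∈ Ppts a b := by
  rw [List.getD_eq_getElem?_getD, List.getElem?_eq_getElem ht]
  exact (Finset.mem_sort _).mp (List.getElem_mem ht)

lemma ptl_mono {t u : ℕ} (htu : t ≤ u) (hu : u < nph a b) :
    (ptl a b).getD t 0 ≤ (ptl a b).getD u 0 := by
  have ht : t < nph a b := lt_of_le_of_lt htu hu
  rw [List.getD_eq_getElem?_getD, List.getElem?_eq_getElem ht,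
    List.getD_eq_getElem?_getD, List.getElem?_eq_getElem hu]
  rcases eq_or_lt_of_le htu with rfl | hlt
  · simp
  · exact List.pairwise_iff_get.mp ptl_sorted ⟨t, ht⟩ ⟨u, hu⟩ hlt

lemma ptl_strict_mono {t u : ℕ} (htu : t < u) (hu : u < nph a b) :
    (ptl a b).getD t 0 < (ptl a b).getD u 0 := by
  have ht : t < nph a b := lt_trans htu hu
  rcases lt_or_eq_of_le (ptl_mono (le_of_lt htu) hu) with h | h
  · exact h
  · exfalso
    rw [List.getD_eq_getElem?_getD, List.getElem?_eq_getElem ht,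
      List.getD_eq_getElem?_getD, List.getElem?_eq_getElem hu] at h
    simp only [Option.getD_some] at h
    exact absurd (List.Nodup.getElem_inj_iff ptl_nodup |>.mp h) (Nat.ne_of_lt htu)

lemma Ppts_subset_Epts : Ppts a b ⊆ Epts a b := Finset.filter_subset _ _

lemma Qc_nonempty (hab : ∀ v, a v ≤ b v) {t : ℕ} (ht : t < nph a b) :
    (Qc a b t).Nonempty :=
  Kp_nonempty_of_mem_Epts hab (Ppts_subset_Epts (ptl_getD_mem ht))

lemma Qc_isClique
    (hadj : ∀ u v : V, G.Adj u v ↔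
      u ≠ v ∧ (Set.Icc (a u) (b u) ∩ Set.Icc (a v) (b v)).Nonempty)
    (t : ℕ) : G.IsClique ↑(Qc a b t) := Kp_isClique hadj _

/-- Distinct phases have distinct cliques. -/
lemma Qc_inj {t u : ℕ} (ht : t < nph a b) (hu : u < nph a b)
    (h : Qc a b t = Qc a b u) : t = u := by
  by_contra hne
  wlog hlt : t < u generalizing t u
  · exact this hu ht h.symm (Ne.symm hne) (by omega)
  have hp : (ptl a b).getD t 0 < (ptl a b).getD u 0 := ptl_strict_mono hlt hu
  have hmem := ptl_getD_mem hu
  rw [Ppts, Finset.mem_filter] at hmem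
  exact hmem.2.2 _ (Ppts_subset_Epts (ptl_getD_mem ht)) hp h

/-- Interval property of the phases. -/
lemma Qc_interval {t u u' : ℕ} (h1 : t ≤ u) (h2 : u ≤ u') (hu' : u' < nph a b)
    {v : V} (hv : v ∈ Qc a b t) (hv' : v ∈ Qc a b u') : v ∈ Qc a b u := by
  rw [Qc, mem_Kp] at *
  exact ⟨le_trans hv.1 (ptl_mono h1 (lt_of_le_of_lt h2 hu')),
    le_trans (ptl_mono h2 hu') hv'.2⟩

/-- Coverage: every vertex belongs to some sweep clique. -/
lemma Qc_cover (hab : ∀ v, a v ≤ b v) (v : V) :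
    ∃ t, t < nph a b ∧ v ∈ Qc a b t := by
  obtain ⟨t, ht, hsub⟩ := exists_sweep_clique_of_common {v} (a v) ⟨v, Finset.mem_singleton_self v⟩
    (by intro w hw
        rw [Finset.mem_singleton] at hw
        rw [hw]
        exact mem_Kp.mpr ⟨le_refl _, hab v⟩)
  exact ⟨t, ht, hsub (Finset.mem_singleton_self v)⟩

/-- Adjacent vertices share a sweep clique. -/
lemma Qc_adj
    (hadj : ∀ u v : V, G.Adj u v ↔
      u ≠ v ∧ (Set.Icc (a u) (b u) ∩ Set.Icc (a v) (b v)).Nonempty)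
    {u v : V} (h : G.Adj u v) : ∃ t, t < nph a b ∧ u ∈ Qc a b t ∧ v ∈ Qc a b t := by
  obtain ⟨hne, m, hm1, hm2⟩ := (hadj u v).mp h
  have hcommon : ∀ w ∈ ({u, v} : Finset V), w ∈ Kp a b m := by
    intro w hw
    rcases Finset.mem_insert.mp hw with rfl | hw
    · exact mem_Kp.mpr ⟨hm1.1, hm1.2⟩
    · rw [Finset.mem_singleton] at hw
      rw [hw]
      exact mem_Kp.mpr ⟨hm2.1, hm2.2⟩
  obtain ⟨t, ht, hsub⟩ := exists_sweep_clique_of_common {u, v} m ⟨u, by simp⟩ hcommon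
  exact ⟨t, ht, hsub (by simp), hsub (by simp)⟩

/-- Vertices strictly to the right of phase `t`. -/
def Aset (a b : V → ℝ) (t : ℕ) : Set V :=
  {v | ∀ u, u ≤ t → u < nph a b → v ∉ Qc a b u}

/-- Vertices that still belong to a clique at phase `≥ t`. -/
def Bset (a b : V → ℝ) (t : ℕ) : Set V :=
  {v | ∃ u, t ≤ u ∧ u < nph a b ∧ v ∈ Qc a b u}

lemma Aset_anti {t t' : ℕ} (h : t' ≤ t) : Aset a b t ⊆ Aset a b t' :=
  fun _ hv u hu hu' => hv u (le_trans hu h) hu'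

lemma Bset_zero (hab : ∀ v, a v ≤ b v) (v : V) : v ∈ Bset a b 0 := by
  obtain ⟨t, ht, hv⟩ := Qc_cover hab v
  exact ⟨t, Nat.zero_le t, ht, hv⟩

lemma mem_Aset_of_Bset {t : ℕ} {v : V} (hB : v ∈ Bset a b t) (hQ : v ∉ Qc a b t) :
    v ∈ Aset a b t := by
  obtain ⟨u', h1, h2, h3⟩ := hB
  intro u hu hur hvu
  exact hQ (Qc_interval hu h1 h2 hvu h3)

lemma Aset_adj
    (hadj : ∀ u v : V, G.Adj u v ↔
      u ≠ v ∧ (Set.Icc (a u) (b u) ∩ Set.Icc (a v) (b v)).Nonempty)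
    {t : ℕ} {v z : V} (hv : v ∈ Aset a b t) (h : G.Adj v z) :
    ∃ u, t < u ∧ u < nph a b ∧ z ∈ Qc a b u ∧ v ∈ Qc a b u := by
  obtain ⟨u, hu, hvu, hzu⟩ := Qc_adj hadj h
  refine ⟨u, ?_, hu, hzu, hvu⟩
  by_contra hle
  exact hv u (le_of_not_gt hle) hu hvu

end Geom2

/-! ### The sweep strategy -/

section Sweep

open scoped Classical

variable [Fintype V] {a b : V → ℝ} {G : SimpleGraph V} {sk : ℕ → Finset V}

/-- The shot set at phase `t`. -/
noncomputable def Cs (a b : V → ℝ) (sk : ℕ → Finset V) (t : ℕ) : Finset V :=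
  Qc a b t \ sk t

/-- The sweep strategy: shoot each phase clique twice, in order. -/
noncomputable def strat (a b : V → ℝ) (sk : ℕ → Finset V) : List (Finset V) :=
  (List.range (2 * nph a b)).map (fun j => Cs a b sk (j / 2))

lemma strat_length : (strat a b sk).length = 2 * nph a b := by
  simp [strat]

lemma shots_strat {j : ℕ} (hj : j < 2 * nph a b) :
    shots (strat a b sk) j = Cs a b sk (j / 2) := by
  rw [shots, List.getD_eq_getElem?_getD, strat]
  rw [List.getElem?_map, List.getElem?_range hj]
  rfl

lemma shots_strat_eq {t j : ℕ} (hj : j < 2 * nph a b) (ht : j / 2 = t) :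
    shots (strat a b sk) j = Cs a b sk t := by
  rw [shots_strat hj, ht]

lemma not_mem_Cs_of_not_Qc {t : ℕ} {v : V} (h : v ∉ Qc a b t) : v ∉ Cs a b sk t :=
  fun hc => h (Finset.mem_sdiff.mp hc).1

lemma strat_mem {s : Finset V} (hs : s ∈ strat a b sk) :
    ∃ t, t < nph a b ∧ s = Cs a b sk t := by
  rw [strat, List.mem_map] at hs
  obtain ⟨j, hj, rfl⟩ := hs
  rw [List.mem_range] at hj
  exact ⟨j / 2, by omega, rfl⟩

lemma sweep_valid (hne : ∀ t, t < nph a b → (Cs a b sk t).Nonempty) :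
    ValidStrategy (strat a b sk) := by
  intro s hs
  obtain ⟨t, ht, rfl⟩ := strat_mem hs
  exact hne t ht

lemma sweep_uses {k : ℕ} (hcard : ∀ t, t < nph a b → (Cs a b sk t).card ≤ k) :
    Uses (strat a b sk) k := by
  intro s hs
  obtain ⟨t, ht, rfl⟩ := strat_mem hs
  exact hcard t ht

/-- The hypotheses on the skip function. -/
structure SweepHyp (G : SimpleGraph V) (a b : V → ℝ) (sk : ℕ → Finset V) : Prop where
  hab : ∀ v, a v ≤ b v
  hadj : ∀ u v : V, G.Adj u v ↔
      u ≠ v ∧ (Set.Icc (a u) (b u) ∩ Set.Icc (a v) (b v)).Nonempty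
  hsub : ∀ t, t < nph a b → sk t ⊆ Qc a b t
  hsingle : ∀ t, t < nph a b → ∀ s ∈ sk t, ∀ s' ∈ sk t, s = s'
  hnbr : ∀ t, t < nph a b → ∀ s ∈ sk t, G.neighborSet s = ↑(Qc a b t) \ {s}
  huniq : ∀ t, t < nph a b → ∀ s ∈ sk t, ∀ u, u < nph a b → s ∈ Qc a b u → u = t

variable (hyp : SweepHyp G a b sk)
include hyp

lemma F2a {t : ℕ} (ht : t < nph a b)
    (hI : Zset G Set.univ (strat a b sk) (2*t) ⊆ Bset a b t) :
    ∀ y ∈ Zset G Set.univ (strat a b sk) (2*t), y ∉ Cs a b sk t →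
      y ∈ Aset a b t ∨ y ∈ sk t := by
  intro y hy hyC
  by_cases hQ : y ∈ Qc a b t
  · right
    by_contra hsk
    exact hyC (Finset.mem_sdiff.mpr ⟨hQ, hsk⟩)
  · exact Or.inl (mem_Aset_of_Bset (hI hy) hQ)

lemma F2b {t : ℕ} (ht : t < nph a b)
    (hI : Zset G Set.univ (strat a b sk) (2*t) ⊆ Bset a b t) :
    ∀ z ∈ Zset G Set.univ (strat a b sk) (2*t+1), z ∉ Cs a b sk t →
      z ∈ Aset a b t := by
  intro z hz hzC
  obtain ⟨y, hyZ, hyS, hyadj⟩ := hz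
  rw [shots_strat_eq (t := t) (by omega) (by omega)] at hyS
  rcases F2a hyp ht hI y hyZ hyS with hA | hsk
  · obtain ⟨u, htu, hur, hzu, _⟩ := Aset_adj hyp.hadj hA hyadj
    refine mem_Aset_of_Bset ⟨u, le_of_lt htu, hur, hzu⟩ ?_
    intro hzQ
    have hzsk : z ∈ sk t := by
      by_contra hc
      exact hzC (Finset.mem_sdiff.mpr ⟨hzQ, hc⟩)
    exact absurd (hyp.huniq t ht z hzsk u hur hzu) (by omega)
  · exfalso
    have hzN : z ∈ G.neighborSet y := hyadj
    rw [hyp.hnbr t ht y hsk] at hzN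
    obtain ⟨hzQ, hzy⟩ := hzN
    have hzsk : z ∈ sk t := by
      by_contra hc
      exact hzC (Finset.mem_sdiff.mpr ⟨hzQ, hc⟩)
    exact hzy (hyp.hsingle t ht z hzsk y hsk)

lemma inv_main : ∀ t, t ≤ nph a b →
    Zset G Set.univ (strat a b sk) (2*t) ⊆ Bset a b t := by
  intro t
  induction t with
  | zero => intro _ v _; exact Bset_zero hyp.hab v
  | succ t ih =>
    intro ht x hx
    have htr : t < nph a b := by omega
    have hI := ih (by omega)
    have h2t2 : 2*(t+1) = (2*t+1)+1 := by ring
    rw [h2t2] at hx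
    obtain ⟨z, hzZ, hzS, hzadj⟩ := hx
    rw [shots_strat_eq (t := t) (by omega) (by omega)] at hzS
    have hzA : z ∈ Aset a b t := F2b hyp htr hI z hzZ hzS
    obtain ⟨u, htu, hur, hxu, _⟩ := Aset_adj hyp.hadj hzA hzadj
    exact ⟨u, by omega, hur, hxu⟩

lemma sweep_final_empty :
    Zset G Set.univ (strat a b sk) (2 * nph a b) = ∅ := by
  rw [Set.eq_empty_iff_forall_notMem]
  intro x hx
  obtain ⟨u, h1, h2, _⟩ := inv_main hyp (nph a b) le_rfl hx
  omega

lemma D_lemma : ∀ t, t < nph a b →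
    (∀ w ∈ Zset G Set.univ (strat a b sk) (2*t+1), w ∈ Aset a b t →
        w ∈ Zset G Set.univ (strat a b sk) (2*t)) ∧
    (∀ w ∈ Zset G Set.univ (strat a b sk) (2*t+2), w ∈ Aset a b t →
        w ∈ Zset G Set.univ (strat a b sk) (2*t+1)) := by
  intro t
  induction t with
  | zero =>
    intro h0
    refine ⟨fun w _ _ => trivial, ?_⟩
    intro w hw hwA
    have h22 : (2*0+2 : ℕ) = 1+1 := by norm_num
    rw [h22] at hw
    obtain ⟨z, hzZ, hzS, hzadj⟩ := hw
    rw [shots_strat_eq (t := 0) (j := 1) (by omega) (by omega)] at hzS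
    have h21 : (2*0+1 : ℕ) = 0+1 := by norm_num
    rw [h21]
    refine ⟨z, trivial, ?_, hzadj⟩
    rw [shots_strat_eq (t := 0) (j := 0) (by omega) (by omega)]
    exact hzS
  | succ t ih =>
    intro ht
    have htr : t < nph a b := by omega
    have ih' := ih htr
    have hD1 : ∀ w ∈ Zset G Set.univ (strat a b sk) (2*(t+1)+1), w ∈ Aset a b (t+1) →
        w ∈ Zset G Set.univ (strat a b sk) (2*(t+1)) := by
      intro w hw hwA
      obtain ⟨y, hyZ, hyS, hyadj⟩ := hw
      rw [shots_strat_eq (t := t+1) (by omega) (by omega)] at hyS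
      rcases F2a hyp ht (inv_main hyp (t+1) (by omega)) y hyZ hyS with hA | hsk
      · -- y is to the right of phase t+1
        have hyZ' : y ∈ Zset G Set.univ (strat a b sk) (2*t+2) := by
          have h22 : 2*(t+1) = 2*t+2 := by ring
          rwa [h22] at hyZ
        have hy2t1 : y ∈ Zset G Set.univ (strat a b sk) (2*t+1) :=
          ih'.2 y hyZ' (Aset_anti (by omega) hA)
        have hynC : y ∉ Cs a b sk t :=
          not_mem_Cs_of_not_Qc (hA t (by omega) htr)
        have hgoal : 2*(t+1) = (2*t+1)+1 := by ring
        rw [hgoal]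
        refine ⟨y, hy2t1, ?_, hyadj⟩
        rw [shots_strat_eq (t := t) (by omega) (by omega)]
        exact hynC
      · exfalso
        have hwN : w ∈ G.neighborSet y := hyadj
        rw [hyp.hnbr (t+1) ht y hsk] at hwN
        exact hwA (t+1) le_rfl ht hwN.1
    refine ⟨hD1, ?_⟩
    intro w hw hwA
    obtain ⟨z, hzZ, hzS, hzadj⟩ := hw
    rw [shots_strat_eq (t := t+1) (by omega) (by omega)] at hzS
    have hzA : z ∈ Aset a b (t+1) :=
      F2b hyp ht (inv_main hyp (t+1) (by omega)) z hzZ hzS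
    have hz2 : z ∈ Zset G Set.univ (strat a b sk) (2*(t+1)) := hD1 z hzZ hzA
    refine ⟨z, hz2, ?_, hzadj⟩
    rw [shots_strat_eq (t := t+1) (by omega) (by omega)]
    exact hzS

/-- Vertices beyond the current sweep front have been contaminated all along. -/
lemma cont_lemma : ∀ j, ∀ w ∈ Zset G Set.univ (strat a b sk) j,
    w ∈ Aset a b ((j-1)/2) → ∀ ρ, ρ ≤ j → w ∈ Zset G Set.univ (strat a b sk) ρ := by
  intro j
  induction j with
  | zero =>
    intro w hw _ ρ hρ
    have : ρ = 0 := by omega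
    rw [this]; exact hw
  | succ j ih =>
    intro w hw hwA ρ hρ
    rcases eq_or_lt_of_le hρ with rfl | hρ'
    · exact hw
    · have hρj : ρ ≤ j := by omega
      have hwj : w ∈ Zset G Set.univ (strat a b sk) j := by
        -- parity of j+1
        rcases Nat.even_or_odd (j+1) with ⟨t, h2t⟩ | ⟨t, h2t⟩
        · -- j+1 = 2t : so t ≥ 1, j+1 = 2(t-1)+2
          have ht1 : 1 ≤ t := by omega
          have hform : j + 1 = 2*(t-1)+2 := by omega
          have htr : t - 1 < nph a b := by
            by_contra hc
            have hge : 2 * nph a b ≤ j + 1 := by omega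
            have := Zset_empty_mono hge (sweep_final_empty hyp)
            rw [this] at hw
            exact hw
          have hAidx : (j+1-1)/2 = t-1 := by omega
          rw [hAidx] at hwA
          have := (D_lemma hyp (t-1) htr).2 w (by rwa [hform] at hw) hwA
          have hform2 : j = 2*(t-1)+1 := by omega
          rwa [← hform2] at this
        · -- j+1 = 2t+1
          have hform : j + 1 = 2*t+1 := by omega
          have htr : t < nph a b := by
            by_contra hc
            have hge : 2 * nph a b ≤ j + 1 := by omega
            have := Zset_empty_mono hge (sweep_final_empty hyp)
            rw [this] at hw
            exact hw
          have hAidx : (j+1-1)/2 = t := by omega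
          rw [hAidx] at hwA
          have := (D_lemma hyp t htr).1 w (by rwa [hform] at hw) hwA
          have hform2 : j = 2*t := by omega
          rwa [← hform2] at this
      have hwA' : w ∈ Aset a b ((j-1)/2) := Aset_anti (by omega) hwA
      exact ih w hwj hwA' ρ hρj


lemma sweep_monotone : IsMonotoneStrat G Set.univ (strat a b sk) := by
  intro v i j hi hij hj hcl hvZ
  rw [strat_length] at hi hj
  set g : ℕ := j / 2 with hg
  have hgr : g < nph a b := by omega
  set c : ℕ := i / 2 with hc
  have hcr : c < nph a b := by omega
  obtain ⟨j', rfl⟩ : ∃ j', j = j' + 1 := ⟨j - 1, by omega⟩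
  -- the clearing of v rules out membership in the deep right region
  have hAcon : v ∉ Aset a b (j' / 2) := by
    intro hA
    have hall := cont_lemma hyp (j'+1) v hvZ hA
    rcases hcl with hshot | ⟨hne2, hsubN⟩
    · rw [shots_strat_eq (t := c) (by omega) rfl] at hshot
      have hvQc : v ∈ Qc a b c := (Finset.mem_sdiff.mp hshot).1
      exact hA c (by omega) hcr hvQc
    · have hvZi1 : v ∈ Zset G Set.univ (strat a b sk) (i+1) := hall (i+1) (by omega)
      obtain ⟨z, hzZ, hzS, hzadj⟩ := hvZi1
      have hzmem : z ∈ G.neighborSet v ∩ Zset G Set.univ (strat a b sk) i :=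
        ⟨hzadj.symm, hzZ⟩
      exact hzS (hsubN hzmem)
  obtain ⟨y, hyZ, hyS, hyadj⟩ := hvZ
  rw [shots_strat_eq (t := g) (by omega) rfl]
  rcases Nat.even_or_odd j' with ⟨t, h2t⟩ | ⟨t, h2t⟩
  · -- j' = 2t even, so g = t
    have hgt : g = t := by omega
    subst hgt
    have hyZ' : y ∈ Zset G Set.univ (strat a b sk) (2*g) := by
      have : j' = 2*g := by omega
      rwa [this] at hyZ
    rw [shots_strat_eq (t := g) (by omega) (by omega)] at hyS
    rcases F2a hyp hgr (inv_main hyp g (by omega)) y hyZ' hyS with hA | hsk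
    · obtain ⟨u, hgu, hur, hvu, _⟩ := Aset_adj hyp.hadj hA hyadj
      have hvA : v ∉ Aset a b g := by
        have : j' / 2 = g := by omega
        rwa [this] at hAcon
      simp only [Aset, Set.mem_setOf_eq] at hvA
      push_neg at hvA
      obtain ⟨u0, hu0g, hu0r, hvu0⟩ := hvA
      have hvQg : v ∈ Qc a b g := Qc_interval hu0g (le_of_lt hgu) hur hvu0 hvu
      refine Finset.mem_sdiff.mpr ⟨hvQg, fun hskg => ?_⟩
      exact absurd (hyp.huniq g hgr v hskg u hur hvu) (by omega)
    · have hvN : v ∈ G.neighborSet y := hyadj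
      rw [hyp.hnbr g hgr y hsk] at hvN
      obtain ⟨hvQ, hvy⟩ := hvN
      refine Finset.mem_sdiff.mpr ⟨hvQ, fun hskg => ?_⟩
      exact hvy (hyp.hsingle g hgr v hskg y hsk)
  · -- j' = 2t+1 odd, so g = t+1
    have hgt : g = t + 1 := by omega
    have htr : t < nph a b := by omega
    have hyZ' : y ∈ Zset G Set.univ (strat a b sk) (2*t+1) := by
      have : j' = 2*t+1 := by omega
      rwa [this] at hyZ
    rw [shots_strat_eq (t := t) (by omega) (by omega)] at hyS
    have hyA : y ∈ Aset a b t := F2b hyp htr (inv_main hyp t (by omega)) y hyZ' hyS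
    obtain ⟨u, htu, hur, hvu, hyu⟩ := Aset_adj hyp.hadj hyA hyadj
    by_cases hskg : v ∈ sk g
    · exfalso
      have hyN : y ∈ G.neighborSet v := hyadj.symm
      rw [hyp.hnbr g hgr v hskg] at hyN
      obtain ⟨hyQg, hyne⟩ := hyN
      have hyZi : y ∈ Zset G Set.univ (strat a b sk) i := by
        refine cont_lemma hyp j' y hyZ ?_ i (by omega)
        have : (j'-1)/2 = t := by omega
        rwa [this]
      rcases hcl with hshot | ⟨hne2, hsubN⟩
      · rw [shots_strat_eq (t := c) (by omega) rfl] at hshot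
        have hvQc : v ∈ Qc a b c := (Finset.mem_sdiff.mp hshot).1
        have := hyp.huniq g hgr v hskg c hcr hvQc
        omega
      · have hymem : y ∈ G.neighborSet v ∩ Zset G Set.univ (strat a b sk) i :=
          ⟨hyadj.symm, hyZi⟩
        have hyshot := hsubN hymem
        rw [Finset.mem_coe, shots_strat_eq (t := c) (by omega) rfl] at hyshot
        have hyQc : y ∈ Qc a b c := (Finset.mem_sdiff.mp hyshot).1
        exact hyA c (by omega) hcr hyQc
    · have hvA : v ∉ Aset a b t := by
        have : j' / 2 = t := by omega
        rwa [this] at hAcon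
      simp only [Aset, Set.mem_setOf_eq] at hvA
      push_neg at hvA
      obtain ⟨u0, hu0g, hu0r, hvu0⟩ := hvA
      have hvQg : v ∈ Qc a b g := Qc_interval (by omega) (by omega) hur hvu0 hvu
      exact Finset.mem_sdiff.mpr ⟨hvQg, hskg⟩


lemma sweep_winning : IsWinning G Set.univ (strat a b sk) := by
  apply isWinning_of_Zset_empty
  rw [strat_length]
  exact sweep_final_empty hyp

end Sweep

/-! ### Instantiations of the sweep -/

section Inst

open scoped Classical

variable [Fintype V] {G : SimpleGraph V}

/-- A simplicial vertex of a maximum clique has exactly the rest of the clique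
as its neighbourhood. -/
lemma simplicial_nbhd {K : Finset V} (hK : G.IsClique ↑K)
    (hcard : K.card = cliqueNum G) {s : V} (hs : s ∈ K)
    (hsimp : G.IsClique (G.neighborSet s)) : G.neighborSet s = ↑K \ {s} := by
  classical
  set T : Finset V := insert s (G.neighborFinset s) with hT
  have hTclique : G.IsClique ↑T := by
    rw [hT, Finset.coe_insert, SimpleGraph.neighborFinset_def, Set.coe_toFinset]
    exact hsimp.insert (fun b hb _ => hb)
  have hKT : K ⊆ T := by
    intro w hw
    rcases eq_or_ne w s with rfl | hne
    · exact Finset.mem_insert_self _ _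
    · refine Finset.mem_insert_of_mem ?_
      rw [SimpleGraph.mem_neighborFinset]
      exact hK hs hw (Ne.symm hne)
  have hTcard : T.card ≤ cliqueNum G := hTclique.card_le_cliqueNum
  have hTK : T = K := (Finset.eq_of_subset_of_card_le hKT (by omega : T.card ≤ K.card)).symm
  ext x
  constructor
  · intro hx
    have hxT : x ∈ T := Finset.mem_insert_of_mem (by rwa [SimpleGraph.mem_neighborFinset])
    rw [hTK] at hxT
    exact ⟨hxT, fun hxs => G.irrefl (by rwa [Set.mem_singleton_iff.mp hxs] at hx)⟩
  · rintro ⟨hxK, hxs⟩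
    rw [Set.mem_singleton_iff] at hxs
    have : x ∈ T := hTK ▸ (hxK : x ∈ K)
    rcases Finset.mem_insert.mp this with rfl | hx
    · exact absurd rfl hxs
    · rwa [SimpleGraph.mem_neighborFinset] at hx

/-- Without skipping, the sweep gives a monotone winning strategy with `ω` hunters. -/
lemma exists_strategy_omega (hint : IsIntervalGraph G) :
    ∃ S : List (Finset V), ValidStrategy S ∧ IsWinning G Set.univ S ∧
      IsMonotoneStrat G Set.univ S ∧ Uses S (cliqueNum G) := by
  obtain ⟨a, b, hab, hadj⟩ := hint
  have hyp : SweepHyp G a b (fun _ => ∅) := by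
    refine ⟨hab, hadj, ?_, ?_, ?_, ?_⟩
    · intro t _; exact Finset.empty_subset _
    · intro t _ s hs; exact absurd hs (Finset.notMem_empty s)
    · intro t _ s hs; exact absurd hs (Finset.notMem_empty s)
    · intro t _ s hs; exact absurd hs (Finset.notMem_empty s)
  refine ⟨strat a b (fun _ => ∅), ?_, sweep_winning hyp, sweep_monotone hyp, ?_⟩
  · apply sweep_valid
    intro t ht
    rw [Cs, Finset.sdiff_empty]
    exact Qc_nonempty hab ht
  · apply sweep_uses
    intro t ht
    rw [Cs, Finset.sdiff_empty]
    exact (Qc_isClique hadj t).card_le_cliqueNum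

/-- With the simplicial hypothesis, skipping a simplicial vertex in every
maximum clique gives a monotone winning strategy with `ω - 1` hunters. -/
lemma exists_strategy_omega_sub_one (hint : IsIntervalGraph G)
    (hω : 2 ≤ cliqueNum G)
    (hsimp : ∀ s : Finset V, G.IsNClique (cliqueNum G) s →
      ∃ v ∈ s, G.IsClique (G.neighborSet v)) :
    ∃ S : List (Finset V), ValidStrategy S ∧ IsWinning G Set.univ S ∧
      IsMonotoneStrat G Set.univ S ∧ Uses S (cliqueNum G - 1) := by
  classical
  obtain ⟨a, b, hab, hadj⟩ := hint
  have hch : ∀ t : ℕ, (Qc a b t).card = cliqueNum G →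
      ∃ v, v ∈ Qc a b t ∧ G.IsClique (G.neighborSet v) := by
    intro t h
    obtain ⟨v, hv1, hv2⟩ := hsimp (Qc a b t) ⟨Qc_isClique hadj t, h⟩
    exact ⟨v, hv1, hv2⟩
  set sk : ℕ → Finset V := fun t =>
    if h : (Qc a b t).card = cliqueNum G then {(hch t h).choose} else ∅ with hsk
  have hskmem : ∀ t, ∀ s ∈ sk t, ∃ h : (Qc a b t).card = cliqueNum G,
      s = (hch t h).choose := by
    intro t s hs
    rw [hsk] at hs
    simp only at hs
    split_ifs at hs with h
    · exact ⟨h, Finset.mem_singleton.mp hs⟩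
    · exact absurd hs (Finset.notMem_empty s)
  have hnbr : ∀ t, ∀ s ∈ sk t, G.neighborSet s = ↑(Qc a b t) \ {s} := by
    intro t s hs
    obtain ⟨h, rfl⟩ := hskmem t s hs
    exact simplicial_nbhd (Qc_isClique hadj t) h (hch t h).choose_spec.1
      (hch t h).choose_spec.2
  have hyp : SweepHyp G a b sk := by
    refine ⟨hab, hadj, ?_, ?_, fun t _ => hnbr t, ?_⟩
    · intro t _ s hs
      obtain ⟨h, rfl⟩ := hskmem t s hs
      exact (hch t h).choose_spec.1
    · intro t _ s hs s' hs'
      obtain ⟨h, rfl⟩ := hskmem t s hs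
      obtain ⟨h', rfl⟩ := hskmem t s' hs'
      rfl
    · -- uniqueness: skipped vertex lies only in its own phase clique
      intro t ht s hs u hu hsu
      obtain ⟨h, rfl⟩ := hskmem t s hs
      set s0 := (hch t h).choose with hs0
      have hsub : Qc a b u ⊆ Qc a b t := by
        intro w hw
        rcases eq_or_ne w s0 with rfl | hne
        · exact (hch t h).choose_spec.1
        · have hadjws : G.Adj s0 w :=
            Qc_isClique hadj u hsu hw (Ne.symm hne)
          have : w ∈ G.neighborSet s0 := hadjws
          rw [hnbr t s0 hs] at this
          exact this.1
      have heq : Qc a b u = Qc a b t := by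
        by_contra hne
        have hss : Qc a b u ⊂ Qc a b t := Finset.ssubset_iff_subset_ne.mpr ⟨hsub, hne⟩
        have hmem := ptl_getD_mem hu
        rw [Ppts, Finset.mem_filter] at hmem
        exact hmem.2.1 _ (Ppts_subset_Epts (ptl_getD_mem ht)) hss
      exact Qc_inj hu ht heq
  refine ⟨strat a b sk, ?_, sweep_winning hyp, sweep_monotone hyp, ?_⟩
  · apply sweep_valid
    intro t ht
    rw [Cs]
    rw [hsk]
    simp only
    split_ifs with h
    · rw [← Finset.card_pos, Finset.card_sdiff_of_subset (by
        simpa using (hch t h).choose_spec.1)]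
      simp only [Finset.card_singleton]
      omega
    · rw [Finset.sdiff_empty]
      exact Qc_nonempty hab ht
  · apply sweep_uses
    intro t ht
    rw [Cs, hsk]
    simp only
    split_ifs with h
    · rw [Finset.card_sdiff_of_subset (by simpa using (hch t h).choose_spec.1)]
      simp only [Finset.card_singleton]
      omega
    · rw [Finset.sdiff_empty]
      have h1 : (Qc a b t).card ≤ cliqueNum G :=
        IsClique.card_le_cliqueNum (Qc_isClique hadj t)
      omega

end Inst

/-- For a finite simple connected interval graph `G`: if every maximum clique
contains a simplicial vertex then `h(G) = mh(G) = ω(G) − 1`;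
otherwise `mh(G) = ω(G)`. -/
theorem interval_hunter_numbers {V : Type} [Fintype V]
    (G : SimpleGraph V) (hG : G.Connected) (hint : IsIntervalGraph G) :
    ((∀ s : Finset V, G.IsNClique (cliqueNum G) s →
        ∃ v ∈ s, G.IsClique (G.neighborSet v)) →
      hunterNum G = cliqueNum G - 1 ∧ mhunterNum G = cliqueNum G - 1) ∧
    (¬(∀ s : Finset V, G.IsNClique (cliqueNum G) s →
        ∃ v ∈ s, G.IsClique (G.neighborSet v)) →
      mhunterNum G = cliqueNum G) := by
  classical
  have hne : Nonempty V := hG.nonempty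
  by_cases h1 : Nat.card V = 1
  -- the one-vertex case
  · have hcard : Fintype.card V = 1 := by rwa [Nat.card_eq_fintype_card] at h1
    obtain ⟨v⟩ := hne
    have hsub : ∀ x y : V, x = y := fun x y => by
      have := Fintype.card_le_one_iff.mp (le_of_eq hcard)
      exact this x y
    have hω1 : cliqueNum G = 1 := by
      apply le_antisymm
      · have h0 : (0:ℕ) ∈ {n | ∃ s : Finset V, G.IsNClique n s} :=
          ⟨∅, by simp [SimpleGraph.isNClique_iff, SimpleGraph.IsClique]⟩
        apply csSup_le ⟨0, h0⟩
        rintro n ⟨s, hs⟩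
        rw [← hs.2]
        calc s.card ≤ Fintype.card V := by simpa using Finset.card_le_univ s
          _ = 1 := hcard
      · apply le_csSup cliqueSet_bddAbove
        refine ⟨{v}, ?_, by simp⟩
        intro x hx y hy hxy
        exact absurd (hsub x y) hxy
    have hsimp : ∀ s : Finset V, G.IsNClique (cliqueNum G) s →
        ∃ w ∈ s, G.IsClique (G.neighborSet w) := by
      intro s hs
      have : s.card = 1 := by rw [hs.2, hω1]
      obtain ⟨w, rfl⟩ := Finset.card_eq_one.mp this
      refine ⟨w, by simp, ?_⟩
      intro x hx y hy hxy
      exact absurd (hsub x y) hxy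
    have hh : hunterNum G = 0 := by rw [hunterNum, hunterNumW, if_pos h1]
    have hmh : mhunterNum G = 0 := by rw [mhunterNum, mhunterNumW, if_pos h1]
    exact ⟨fun _ => ⟨by rw [hh, hω1], by rw [hmh, hω1]⟩, fun hcon => absurd hsimp hcon⟩
  -- at least two vertices
  · have hcard2 : 2 ≤ Fintype.card V := by
      have h0 : 0 < Fintype.card V := Fintype.card_pos
      have : Nat.card V = Fintype.card V := Nat.card_eq_fintype_card
      omega
    -- there is an edge, so ω ≥ 2
    have hω2 : 2 ≤ cliqueNum G := by
      obtain ⟨u, w, huw⟩ := Fintype.exists_pair_of_one_lt_card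
        (show 1 < Fintype.card V by omega)
      obtain ⟨p⟩ := hG.preconnected u w
      have hadj : ∃ x y : V, G.Adj x y := by
        cases p with
        | nil => exact absurd rfl huw
        | cons h _ => exact ⟨_, _, h⟩
      obtain ⟨x, y, hxy⟩ := hadj
      have hclique : G.IsClique ↑({x, y} : Finset V) := by
        intro p hp q hq hpq
        simp only [Finset.coe_insert, Finset.coe_singleton, Set.mem_insert_iff,
          Set.mem_singleton_iff] at hp hq
        rcases hp with rfl | rfl <;> rcases hq with rfl | rfl
        · exact absurd rfl hpq
        · exact hxy
        · exact hxy.symm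
        · exact absurd rfl hpq
      have hcard : ({x, y} : Finset V).card = 2 := by
        rw [Finset.card_insert_of_notMem (by simpa using hxy.ne), Finset.card_singleton]
      calc 2 = ({x, y} : Finset V).card := hcard.symm
        _ ≤ cliqueNum G := hclique.card_le_cliqueNum
    obtain ⟨Kmax, hKmax⟩ := exists_cliqueNum (G := G)
    have hh_eq : hunterNum G =
        sInf {k | ∃ S : List (Finset V), ValidStrategy S ∧ IsWinning G Set.univ S ∧ Uses S k} := by
      rw [hunterNum, hunterNumW, if_neg h1]
    have hmh_eq : mhunterNum G =
        sInf {k | ∃ S : List (Finset V), ValidStrategy S ∧ IsWinning G Set.univ S ∧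
          IsMonotoneStrat G Set.univ S ∧ Uses S k} := by
      rw [mhunterNum, mhunterNumW, if_neg h1]
    have hlb_h : ∀ k ∈ {k | ∃ S : List (Finset V),
        ValidStrategy S ∧ IsWinning G Set.univ S ∧ Uses S k}, cliqueNum G - 1 ≤ k := by
      rintro k ⟨S, _, hwin, huse⟩
      have := card_le_succ_of_winning hKmax.1 hwin huse
      rw [hKmax.2] at this
      omega
    have hlb_mh : ∀ k ∈ {k | ∃ S : List (Finset V),
        ValidStrategy S ∧ IsWinning G Set.univ S ∧ IsMonotoneStrat G Set.univ S ∧ Uses S k},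
        cliqueNum G - 1 ≤ k := by
      rintro k ⟨S, _, hwin, _, huse⟩
      have := card_le_succ_of_winning hKmax.1 hwin huse
      rw [hKmax.2] at this
      omega
    constructor
    · -- every maximum clique has a simplicial vertex
      intro hsimp
      obtain ⟨S, hv, hw, hm, hu⟩ := exists_strategy_omega_sub_one hint hω2 hsimp
      have hmem_h : (cliqueNum G - 1) ∈ {k | ∃ S : List (Finset V),
          ValidStrategy S ∧ IsWinning G Set.univ S ∧ Uses S k} := ⟨S, hv, hw, hu⟩
      have hmem_mh : (cliqueNum G - 1) ∈ {k | ∃ S : List (Finset V),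
          ValidStrategy S ∧ IsWinning G Set.univ S ∧ IsMonotoneStrat G Set.univ S ∧
          Uses S k} := ⟨S, hv, hw, hm, hu⟩
      constructor
      · rw [hh_eq]
        exact le_antisymm (Nat.sInf_le hmem_h) (le_csInf ⟨_, hmem_h⟩ hlb_h)
      · rw [hmh_eq]
        exact le_antisymm (Nat.sInf_le hmem_mh) (le_csInf ⟨_, hmem_mh⟩ hlb_mh)
    · -- some maximum clique has no simplicial vertex
      intro hnsimp
      push_neg at hnsimp
      obtain ⟨K, hK, hKns⟩ := hnsimp
      obtain ⟨S, hv, hw, hm, hu⟩ := exists_strategy_omega hint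
      have hmem_mh : cliqueNum G ∈ {k | ∃ S : List (Finset V),
          ValidStrategy S ∧ IsWinning G Set.univ S ∧ IsMonotoneStrat G Set.univ S ∧
          Uses S k} := ⟨S, hv, hw, hm, hu⟩
      have hlb : ∀ k ∈ {k | ∃ S : List (Finset V),
          ValidStrategy S ∧ IsWinning G Set.univ S ∧ IsMonotoneStrat G Set.univ S ∧
          Uses S k}, cliqueNum G ≤ k := by
        rintro k ⟨S', _, hwin', hmono', huse'⟩
        have := card_le_of_monotone_winning hK.1 (by rw [hK.2]; exact hω2)
          hKns hwin' hmono' huse'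
        rwa [hK.2] at this
      rw [hmh_eq]
      exact le_antisymm (Nat.sInf_le hmem_mh) (le_csInf ⟨_, hmem_mh⟩ hlb)

end HuntersRabbit
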